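/- arXiv:1602.04941 — 2 statements merged into one kernel-verified Lean document; each statement's English description precedes it below -/
import Mathlib

section
/- Let z ∈ ℝ^d be Gaussian with mean (μ^Z − μ)_d and covariance Σ_d^Z, and let A_d be invertible symmetric positive definite d×d matrices. Write S_d = A_d^{-1/2} Σ_d^Z A_d^{-1/2} with eigenvalues α_1^d,…,α_d^d, and m_d = A_d^{-1/2}(μ^Z − μ)_d. If (1/d)‖m_d‖² → L_μ (finite), (1/d)trace(S_d) → L_S (finite), and (1/d)max_i α_i^d → 0, then (1/d)‖A_d^{-1/2}(z − μ)_d‖² → L_μ + L_S in probability as d → ∞. -/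
/-!
Put `F_d = (1/d) ∑ᵢ vᵢ²`. Its mean is `(∑ᵢ αᵢ + ∑ᵢ mᵢ²)/d → L_S + L_μ`. By independence its
variance is `(1/d²) ∑ᵢ Var(vᵢ²)`, and writing `vᵢ = mᵢ + √αᵢ Z` with `Z` standard normal gives
`Var(vᵢ²) ≤ E[(vᵢ² - mᵢ²)²] ≤ αᵢ (2 E[Z⁴] αᵢ + 8 mᵢ²)`, so the variance is at most
`(max α/d) · (2 E[Z⁴] ∑ α/d + 8 ∑ m²/d) → 0`. Chebyshev's inequality concludes.
-/

open Filter MeasureTheory ProbabilityTheory Topology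
open scoped NNReal

lemma Finset.sum_mul_le_sup_mul_sum {ι : Type*} (s : Finset ι) (a : ι → ℝ≥0) {b : ι → ℝ}
    (hb : ∀ i ∈ s, 0 ≤ b i) : ∑ i ∈ s, (a i : ℝ) * b i ≤ ((s.sup a : ℝ≥0) : ℝ) * ∑ i ∈ s, b i := by
  rw [Finset.mul_sum]
  exact Finset.sum_le_sum fun i hi ↦
    mul_le_mul_of_nonneg_right (NNReal.coe_le_coe.2 (Finset.le_sup hi)) (hb i hi)

namespace ProbabilityTheory

section GaussianReal

variable {μ : ℝ} {v : ℝ≥0}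

lemma integrable_pow_gaussianReal (n : ℕ) : Integrable (fun x ↦ x ^ n) (gaussianReal μ v) :=
  integrable_pow_of_mem_interior_integrableExpSet (by simp) n

lemma integral_sq_gaussianReal : ∫ x, x ^ 2 ∂gaussianReal μ v = v + μ ^ 2 := by
  have h := variance_eq_sub (memLp_id_gaussianReal (μ := μ) (v := v) 2)
  rw [variance_id_gaussianReal] at h
  simp only [Pi.pow_apply, id_eq, integral_id_gaussianReal] at h
  linarith

lemma integral_pow_four_gaussianReal_zero :
    ∫ x, x ^ 4 ∂gaussianReal 0 v = v ^ 2 * ∫ z, z ^ 4 ∂gaussianReal 0 1 := by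
  have hscale : (gaussianReal 0 1).map (fun z ↦ √v * z) = gaussianReal 0 v := by
    rw [gaussianReal_map_const_mul, mul_zero, mul_one]
    congr
    exact Real.sq_sqrt v.coe_nonneg
  rw [← hscale, integral_map (by fun_prop) (by fun_prop), ← integral_const_mul]
  congr with z
  rw [mul_pow, show (4 : ℕ) = 2 * 2 from rfl, pow_mul, Real.sq_sqrt v.coe_nonneg]

lemma variance_sq_gaussianReal_le :
    Var[fun x ↦ x ^ 2; gaussianReal μ v] ≤
      2 * (∫ z, z ^ 4 ∂gaussianReal 0 1) * v ^ 2 + 8 * μ ^ 2 * v := by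
  have hshift : (gaussianReal 0 v).map (· + μ) = gaussianReal μ v := by
    simpa using gaussianReal_map_add_const (μ := 0) (v := v) μ
  rw [← hshift, variance_map (by fun_prop) (by fun_prop)]
  calc Var[(fun x ↦ x ^ 2) ∘ (· + μ); gaussianReal 0 v]
      = Var[fun y ↦ (y ^ 2 + 2 * μ * y) + μ ^ 2; gaussianReal 0 v] := by
        congr with y
        simp only [Function.comp_apply]
        ring
    _ = Var[fun y ↦ y ^ 2 + 2 * μ * y; gaussianReal 0 v] := variance_add_const (by fun_prop) _
    _ ≤ ∫ y, (y ^ 2 + 2 * μ * y) ^ 2 ∂gaussianReal 0 v := variance_le_expectation_sq (by fun_prop)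
    _ ≤ ∫ y, 2 * y ^ 4 + 8 * μ ^ 2 * y ^ 2 ∂gaussianReal 0 v := by
        refine integral_mono_of_nonneg (ae_of_all _ fun y ↦ sq_nonneg _) ?_
          (ae_of_all _ fun y ↦ ?_)
        · exact ((integrable_pow_gaussianReal 4).const_mul 2).add
            ((integrable_pow_gaussianReal 2).const_mul _)
        · nlinarith [sq_nonneg (y ^ 2 - 2 * μ * y)]
    _ = 2 * (∫ z, z ^ 4 ∂gaussianReal 0 1) * v ^ 2 + 8 * μ ^ 2 * v := by
        rw [integral_add ((integrable_pow_gaussianReal 4).const_mul 2)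
            ((integrable_pow_gaussianReal 2).const_mul _), integral_const_mul, integral_const_mul,
          integral_pow_four_gaussianReal_zero, integral_sq_gaussianReal]
        ring

end GaussianReal

section HasLawGaussianReal

variable {Ω : Type*} {mΩ : MeasurableSpace Ω} {P : Measure Ω} {X : Ω → ℝ} {μ : ℝ} {v : ℝ≥0}

lemma HasLaw.memLp_sq_of_gaussianReal (hX : HasLaw X (gaussianReal μ v) P) :
    MemLp (fun ω ↦ X ω ^ 2) 2 P := by
  refine MemLp.comp_of_map (g := fun x ↦ x ^ 2) ?_ hX.aemeasurable
  rw [hX.map_eq, memLp_two_iff_integrable_sq (by fun_prop)]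
  simpa [← pow_mul] using integrable_pow_gaussianReal (μ := μ) (v := v) 4

lemma HasLaw.integral_sq_of_gaussianReal (hX : HasLaw X (gaussianReal μ v) P) :
    P[fun ω ↦ X ω ^ 2] = v + μ ^ 2 := by
  rw [← integral_sq_gaussianReal, ← hX.integral_comp (by fun_prop)]
  rfl

lemma HasLaw.variance_sq_le_of_gaussianReal (hX : HasLaw X (gaussianReal μ v) P) :
    Var[fun ω ↦ X ω ^ 2; P] ≤
      2 * (∫ z, z ^ 4 ∂gaussianReal 0 1) * v ^ 2 + 8 * μ ^ 2 * v := by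
  calc Var[fun ω ↦ X ω ^ 2; P] = Var[fun x ↦ x ^ 2; gaussianReal μ v] := by
        rw [← hX.map_eq, variance_map (by fun_prop) hX.aemeasurable]
        rfl
    _ ≤ _ := variance_sq_gaussianReal_le

end HasLawGaussianReal

section SumOfSquares

variable {Ω ι : Type*} {mΩ : MeasurableSpace Ω} {P : Measure Ω} [Fintype ι]
  {X : ι → Ω → ℝ} {m : ι → ℝ} {α : ι → ℝ≥0}

lemma integral_sum_sq_of_hasLaw_gaussianReal [IsFiniteMeasure P]
    (hX : ∀ i, HasLaw (X i) (gaussianReal (m i) (α i)) P) :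
    P[fun ω ↦ ∑ i, X i ω ^ 2] = ∑ i, ((α i : ℝ) + m i ^ 2) := by
  rw [integral_finsetSum _ fun i _ ↦ (hX i).memLp_sq_of_gaussianReal.integrable one_le_two]
  exact Finset.sum_congr rfl fun i _ ↦ (hX i).integral_sq_of_gaussianReal

lemma variance_sum_sq_le_of_hasLaw_gaussianReal (hindep : iIndepFun X P)
    (hX : ∀ i, HasLaw (X i) (gaussianReal (m i) (α i)) P) :
    Var[fun ω ↦ ∑ i, X i ω ^ 2; P] ≤ ((Finset.univ.sup α : ℝ≥0) : ℝ) *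
      ∑ i, (2 * (∫ z, z ^ 4 ∂gaussianReal 0 1) * α i + 8 * m i ^ 2) := by
  have hpair : Set.Pairwise (Finset.univ : Finset ι)
      fun i j ↦ (fun ω ↦ X i ω ^ 2) ⟂ᵢ[P] (fun ω ↦ X j ω ^ 2) := fun i _ j _ hij ↦
    (hindep.indepFun hij).comp (measurable_id.pow_const 2) (measurable_id.pow_const 2)
  have hc₄ : 0 ≤ ∫ z, z ^ 4 ∂gaussianReal 0 1 := integral_nonneg fun z ↦ by positivity
  calc Var[fun ω ↦ ∑ i, X i ω ^ 2; P] = ∑ i, Var[fun ω ↦ X i ω ^ 2; P] := by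
        simpa [Finset.sum_fn] using
          IndepFun.variance_sum (fun i _ ↦ (hX i).memLp_sq_of_gaussianReal) hpair
    _ ≤ ∑ i, (α i : ℝ) * (2 * (∫ z, z ^ 4 ∂gaussianReal 0 1) * α i + 8 * m i ^ 2) :=
        Finset.sum_le_sum fun i _ ↦ (hX i).variance_sq_le_of_gaussianReal.trans_eq (by ring)
    _ ≤ _ := Finset.sum_mul_le_sup_mul_sum _ _ fun i _ ↦ by positivity

end SumOfSquares

lemma tendstoInMeasure_const_of_tendsto_integral_of_tendsto_variance {ι Ω : Type*}
    {l : Filter ι} {mΩ : MeasurableSpace Ω} {P : Measure Ω} [IsFiniteMeasure P]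
    {F : ι → Ω → ℝ} {c : ℝ} (hF : ∀ i, MemLp (F i) 2 P)
    (hmean : Tendsto (fun i ↦ P[F i]) l (𝓝 c)) (hvar : Tendsto (fun i ↦ Var[F i; P]) l (𝓝 0)) :
    TendstoInMeasure P F l fun _ ↦ c := by
  rw [tendstoInMeasure_iff_dist]
  intro ε hε
  have hε2 : 0 < ε / 2 := half_pos hε
  have hchebyshev : Tendsto (fun i ↦ ENNReal.ofReal (Var[F i; P] / (ε / 2) ^ 2)) l (𝓝 0) := by
    simpa using ENNReal.tendsto_ofReal (hvar.div_const ((ε / 2) ^ 2))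
  refine tendsto_of_tendsto_of_tendsto_of_le_of_le' tendsto_const_nhds hchebyshev
    (Eventually.of_forall fun _ ↦ zero_le) ?_
  filter_upwards [hmean.eventually (Metric.closedBall_mem_nhds c hε2)] with i hi
  refine (measure_mono fun ω hω ↦ ?_).trans (meas_ge_le_variance_div_sq (hF i) hε2)
  simp only [Set.mem_ofPred_eq, Real.dist_eq] at hi hω ⊢
  linarith [abs_sub_le (F i ω) (P[F i]) c]

end ProbabilityTheory

/-- In the eigenbasis of `S_d = A_d^{-1/2} Σ_d^Z A_d^{-1/2}`: `v d i` are the coordinates of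
`A_d^{-1/2}(z − μ)_d`, `m d i` those of `m_d`, and `α d i` are the eigenvalues of `S_d`. -/
theorem mahalanobis_tendsto_sum_limits_general {Ω : Type*} [MeasurableSpace Ω]
    (P : Measure Ω) [IsProbabilityMeasure P]
    (m : (d : ℕ) → Fin d → ℝ)
    (v : (d : ℕ) → Fin d → Ω → ℝ) (α : (d : ℕ) → Fin d → ℝ≥0)
    (hindep : ∀ d, iIndepFun (v d) P)
    (hgauss : ∀ d i, Measure.map (v d i) P = gaussianReal (m d i) (α d i))
    (Lμ LS : ℝ)
    (hm : Tendsto (fun d : ℕ => (∑ i, (m d i) ^ 2) / d) atTop (nhds Lμ))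
    (htrace : Tendsto (fun d : ℕ => (∑ i, (α d i : ℝ)) / d) atTop (nhds LS))
    (hmax : Tendsto (fun d : ℕ => ((Finset.univ.sup (α d) : ℝ≥0) : ℝ) / d) atTop (nhds 0)) :
    TendstoInMeasure P (fun d ω => (∑ i, (v d i ω) ^ 2) / d) atTop (fun _ => Lμ + LS) := by
  have hlaw : ∀ d i, HasLaw (v d i) (gaussianReal (m d i) (α d i)) P := fun d i ↦
    ⟨.of_map_ne_zero (hgauss d i ▸ IsProbabilityMeasure.ne_zero _), hgauss d i⟩
  set c₄ := ∫ z, z ^ 4 ∂gaussianReal 0 1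
  refine tendstoInMeasure_const_of_tendsto_integral_of_tendsto_variance
    (fun d ↦ by simpa only [div_eq_mul_inv] using
      (memLp_finsetSum _ fun i _ ↦ (hlaw d i).memLp_sq_of_gaussianReal).mul_const _)
    ?_ ?_
  · rw [add_comm]
    refine (htrace.add hm).congr fun d ↦ ?_
    rw [integral_div, integral_sum_sq_of_hasLaw_gaussianReal (hlaw d), Finset.sum_add_distrib,
      add_div]
  · have hbound := hmax.mul ((htrace.const_mul (2 * c₄)).add (hm.const_mul 8))
    rw [zero_mul] at hbound
    refine squeeze_zero (fun d ↦ variance_nonneg _ _) (fun d ↦ ?_) hbound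
    simp_rw [div_eq_mul_inv, variance_mul_const]
    refine (mul_le_mul_of_nonneg_right
      (variance_sum_sq_le_of_hasLaw_gaussianReal (hindep d) (hlaw d)) (sq_nonneg _)).trans_eq ?_
    rw [Finset.sum_add_distrib, ← Finset.mul_sum, ← Finset.mul_sum]
    ring

/-- Proposition 1 of the paper (finite-limit case), in the eigenbasis of
`S_d = A_d^{-1/2} Σ_d^Z A_d^{-1/2}`: the coordinates of `v d = A_d^{-1/2}(z − μ)_d`
are independent Gaussians with means `m d i` (the coordinates of
`m_d = A_d^{-1/2}(μ^Z − μ)_d`) and variances `α d i` (the eigenvalues of `S_d`).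
If `(1/d)‖m_d‖² → L_μ`, `(1/d) trace(S_d) → L_S` and `(1/d) max_i α_i^d → 0`,
then `(1/d)‖A_d^{-1/2}(z − μ)_d‖² → L_μ + L_S` in probability. -/
theorem mahalanobis_tendsto_sum_limits {Ω : Type*} [MeasurableSpace Ω]
    (P : Measure Ω) [IsProbabilityMeasure P]
    (m : (d : ℕ) → Fin d → ℝ)
    (v : (d : ℕ) → Fin d → Ω → ℝ) (α : (d : ℕ) → Fin d → ℝ≥0)
    (hαpos : ∀ d i, 0 < α d i)
    (hindep : ∀ d, iIndepFun (v d) P)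
    (hgauss : ∀ d i, Measure.map (v d i) P = gaussianReal (m d i) (α d i))
    (Lμ LS : ℝ)
    (hm : Tendsto (fun d : ℕ => (∑ i, (m d i) ^ 2) / d) atTop (nhds Lμ))
    (htrace : Tendsto (fun d : ℕ => (∑ i, (α d i : ℝ)) / d) atTop (nhds LS))
    (hmax : Tendsto (fun d : ℕ => ((Finset.univ.sup (α d) : ℝ≥0) : ℝ) / d) atTop (nhds 0)) :
    TendstoInMeasure P (fun d ω => (∑ i, (v d i ω) ^ 2) / d) atTop (fun _ => Lμ + LS) :=
  mahalanobis_tendsto_sum_limits_general P m v α hindep hgauss Lμ LS hm htrace hmax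
end

section
/- Let ȳ_j (1 ≤ j ≤ T) be independent normal random variables with mean μ_j and variance λ_j/m (λ_j > 0). Then E[ Σ_{j=1}^T |ȳ_j − μ_j| · |ȳ_j + μ_j| / λ_j ] ≤ ( (T/m) · Σ_{j=1}^T ( 1/m + 4 μ_j²/λ_j ) )^{1/2}. -/
/-!
By linearity of the expectation the bound splits over the coordinates. For `X ~ N(μ, v)`,
Cauchy–Schwarz gives `E[|X - μ| |X + μ|] ≤ √(E[(X - μ)²] E[(X + μ)²]) = √(v (v + 4μ²))`;
dividing by `λ` with `v = λ/m` bounds each summand by `√A_j`, `A_j = (1/m)(1/m + 4μ_j²/λ_j)`,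
and Cauchy–Schwarz in `ℝ^T` gives `Σ_j √A_j ≤ √(T Σ_j A_j)`.
-/

open MeasureTheory ProbabilityTheory
open scoped NNReal

theorem Real.sum_sqrt_le_sqrt_card_mul_sum {ι : Type*} (s : Finset ι) {f : ι → ℝ}
    (hf : ∀ i, 0 ≤ f i) :
    ∑ i ∈ s, √(f i) ≤ √(s.card * ∑ i ∈ s, f i) := by
  simpa [Real.sqrt_mul (Nat.cast_nonneg _)] using
    Real.sum_sqrt_mul_sqrt_le s (fun _ => zero_le_one) hf

section

variable {Ω : Type*} {mΩ : MeasurableSpace Ω} {P : Measure Ω}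

theorem integral_abs_mul_abs_le_sqrt_mul_sqrt {f g : Ω → ℝ} (hf : MemLp f 2 P)
    (hg : MemLp g 2 P) :
    ∫ ω, |f ω| * |g ω| ∂P ≤ √(∫ ω, f ω ^ 2 ∂P) * √(∫ ω, g ω ^ 2 ∂P) := by
  have h := integral_mul_le_Lp_mul_Lq_of_nonneg Real.HolderConjugate.two_two
    (ae_of_all _ fun ω => abs_nonneg (f ω)) (ae_of_all _ fun ω => abs_nonneg (g ω))
    (by simpa only [Real.norm_eq_abs, ENNReal.ofReal_ofNat] using hf.norm)
    (by simpa only [Real.norm_eq_abs, ENNReal.ofReal_ofNat] using hg.norm)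
  simpa only [← Real.sqrt_eq_rpow, Real.rpow_two, sq_abs] using h

theorem MeasureTheory.MemLp.integrable_abs_sub_mul_abs_add [IsFiniteMeasure P] {X : Ω → ℝ}
    (hX : MemLp X 2 P) (a b : ℝ) : Integrable (fun ω => |X ω - a| * |X ω + b|) P :=
  (hX.sub (memLp_const a)).norm.integrable_mul (hX.add (memLp_const b)).norm

theorem integral_add_const_sq [IsProbabilityMeasure P] {X : Ω → ℝ} (hX : MemLp X 2 P) (c : ℝ) :
    ∫ ω, (X ω + c) ^ 2 ∂P = Var[X; P] + (P[X] + c) ^ 2 := by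
  have hXc : MemLp (fun ω => X ω + c) 2 P := hX.add (memLp_const c)
  rw [← variance_add_const hX.aestronglyMeasurable c, variance_eq_sub hXc,
    integral_add (hX.integrable one_le_two) (integrable_const c)]
  simp

theorem integral_abs_sub_mul_abs_add_le [IsProbabilityMeasure P] {X : Ω → ℝ}
    (hX : MemLp X 2 P) :
    ∫ ω, |X ω - P[X]| * |X ω + P[X]| ∂P ≤ √(Var[X; P] * (Var[X; P] + 4 * P[X] ^ 2)) :=
  calc ∫ ω, |X ω - P[X]| * |X ω + P[X]| ∂P
      ≤ √(∫ ω, (X ω - P[X]) ^ 2 ∂P) * √(∫ ω, (X ω + P[X]) ^ 2 ∂P) :=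
        integral_abs_mul_abs_le_sqrt_mul_sqrt (hX.sub (memLp_const _)) (hX.add (memLp_const _))
    _ = √(Var[X; P] * (Var[X; P] + 4 * P[X] ^ 2)) := by
        rw [← variance_eq_integral hX.aemeasurable, integral_add_const_sq hX,
          ← Real.sqrt_mul (variance_nonneg X P)]
        ring_nf

theorem ProbabilityTheory.hasLaw_of_map_eq {𝓧 : Type*} {m𝓧 : MeasurableSpace 𝓧} {X : Ω → 𝓧}
    {ν : Measure 𝓧} [NeZero ν] (hX : P.map X = ν) : HasLaw X ν P where
  aemeasurable := .of_map_ne_zero (hX ▸ NeZero.ne ν)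
  map_eq := hX

theorem ProbabilityTheory.HasLaw.memLp_gaussianReal {X : Ω → ℝ} {μ : ℝ} {v : ℝ≥0}
    (hX : HasLaw X (gaussianReal μ v) P) (p : ℝ≥0) : MemLp X p P := by
  have h := memLp_id_gaussianReal (μ := μ) (v := v) p
  rw [← hX.map_eq] at h
  exact h.comp_of_map hX.aemeasurable

theorem integral_abs_sub_mul_abs_add_div_le_of_hasLaw_gaussianReal [IsProbabilityMeasure P]
    {X : Ω → ℝ} {μ : ℝ} {lam m : ℝ≥0} (hlam : lam ≠ 0)
    (hX : HasLaw X (gaussianReal μ (lam / m)) P) :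
    ∫ ω, |X ω - μ| * |X ω + μ| / lam ∂P ≤ √(1 / m * (1 / m + 4 * μ ^ 2 / lam)) := by
  have hmean : P[X] = μ := by rw [hX.integral_eq, integral_id_gaussianReal]
  have hvar : Var[X; P] = lam / m := by
    rw [hX.variance_eq, variance_id_gaussianReal, NNReal.coe_div]
  have hlamR : (0 : ℝ) < lam := by positivity
  rw [integral_div, div_le_iff₀ hlamR]
  calc ∫ ω, |X ω - μ| * |X ω + μ| ∂P ≤ √(lam / m * (lam / m + 4 * μ ^ 2)) := by
        simpa only [hmean, hvar] using integral_abs_sub_mul_abs_add_le (hX.memLp_gaussianReal 2)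
    _ = √(1 / m * (1 / m + 4 * μ ^ 2 / lam) * lam ^ 2) := by
        congr 1
        field_simp
    _ = √(1 / m * (1 / m + 4 * μ ^ 2 / lam)) * lam := by
        rw [Real.sqrt_mul (by positivity), Real.sqrt_sq hlamR.le]

end

theorem mean_abs_product_bound_general {Ω : Type*} [MeasurableSpace Ω]
    (P : Measure Ω) [IsProbabilityMeasure P]
    (T : ℕ) (m : ℝ≥0)
    (μ : Fin T → ℝ) (lam : Fin T → ℝ≥0) (hlam : ∀ j, 0 < lam j)
    (y : Fin T → Ω → ℝ)
    (hgauss : ∀ j, Measure.map (y j) P = gaussianReal (μ j) (lam j / m)) :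
    ∫ ω, (∑ j, |y j ω - μ j| * |y j ω + μ j| / (lam j : ℝ)) ∂P ≤
      Real.sqrt (((T : ℝ) / (m : ℝ)) *
        ∑ j, ((1 : ℝ) / (m : ℝ) + 4 * (μ j) ^ 2 / (lam j : ℝ))) := by
  have hX j := hasLaw_of_map_eq (hgauss j)
  calc ∫ ω, (∑ j, |y j ω - μ j| * |y j ω + μ j| / (lam j : ℝ)) ∂P
      = ∑ j, ∫ ω, |y j ω - μ j| * |y j ω + μ j| / (lam j : ℝ) ∂P :=
        integral_finsetSum _ fun j _ =>
          (((hX j).memLp_gaussianReal 2).integrable_abs_sub_mul_abs_add _ _).div_const _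
    _ ≤ ∑ j, √(1 / m * (1 / m + 4 * μ j ^ 2 / lam j)) := Finset.sum_le_sum fun j _ =>
        integral_abs_sub_mul_abs_add_div_le_of_hasLaw_gaussianReal (hlam j).ne' (hX j)
    _ ≤ √(T * ∑ j, 1 / m * (1 / m + 4 * μ j ^ 2 / lam j)) := by
        simpa only [Finset.card_univ, Fintype.card_fin] using
          Real.sum_sqrt_le_sqrt_card_mul_sum Finset.univ
            (f := fun j => 1 / m * (1 / m + 4 * μ j ^ 2 / lam j)) fun j => by positivity
    _ = _ := by rw [← Finset.mul_sum]; ring_nf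

/-- Estimate from the proof of Theorem 3 of the paper: if `y j` are independent
`N(μ j, λ j / m)` variables, then
`E[Σ_j |y_j − μ_j|·|y_j + μ_j|/λ_j] ≤ √((T/m)·Σ_j (1/m + 4 μ_j²/λ_j))`. -/
theorem mean_abs_product_bound {Ω : Type*} [MeasurableSpace Ω]
    (P : Measure Ω) [IsProbabilityMeasure P]
    (T : ℕ) (m : ℝ≥0) (hm : 0 < m)
    (μ : Fin T → ℝ) (lam : Fin T → ℝ≥0) (hlam : ∀ j, 0 < lam j)
    (y : Fin T → Ω → ℝ)
    (hindep : iIndepFun y P)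
    (hgauss : ∀ j, Measure.map (y j) P = gaussianReal (μ j) (lam j / m)) :
    ∫ ω, (∑ j, |y j ω - μ j| * |y j ω + μ j| / (lam j : ℝ)) ∂P ≤
      Real.sqrt (((T : ℝ) / (m : ℝ)) *
        ∑ j, ((1 : ℝ) / (m : ℝ) + 4 * (μ j) ^ 2 / (lam j : ℝ))) :=
  mean_abs_product_bound_general P T m μ lam hlam y hgauss
end
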